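/- Liar-cycle support conditions preclude a global joint distribution (probabilistic core of Theorem 15 and of the proof that a finite Yablo-type paradox is impossible): Let N ≥ 2, let A_0, …, A_{N−1} be nonempty finite types with values v_i ∈ A_i, and let p be a probability mass function on the product Π_{i} A_i. If p assigns probability 0 to each event {ω : ω_i = v_i and ω_{i+1} ≠ v_{i+1}} for i = 0, …, N−2, and probability 0 to the event {ω : ω_{N−1} = v_{N−1} and ω_0 = v_0}, then p assigns probability 0 to the event {ω : ω_0 = v_0}. -/

import Mathlib

/-! With `Eᵢ = {ω | ωᵢ = vᵢ}`, the set `E₀ \ E_{N-1}` is covered by the null steps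
`Eᵢ \ Eᵢ₊₁`, so almost every outcome in `E₀` also lies in `E_{N-1}`. The last condition makes
`E₀ ∩ E_{N-1}` null too, hence `E₀` is null. -/

noncomputable def prob {α : Type*} (p : PMF α) (E : Set α) : ENNReal :=
  p.toOuterMeasure E

open MeasureTheory

section OuterMeasureClass

variable {α F : Type*} [FunLike F (Set α) ENNReal] [OuterMeasureClass F α] (μ : F)

theorem measure_sdiff_null_of_chain {n : ℕ} (E : Fin (n + 1) → Set α)
    (hstep : ∀ i : Fin n, μ (E i.castSucc \ E i.succ) = 0) (j : Fin (n + 1)) :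
    μ (E 0 \ E j) = 0 := by
  induction j using Fin.induction with
  | zero => simp
  | succ i ih =>
    exact measure_mono_null (sdiff_triangle _ (E i.castSucc) _)
      (measure_union_null ih (hstep i))

theorem measure_null_of_sdiff_null_of_inter_null {s t : Set α}
    (hdiff : μ (s \ t) = 0) (hinter : μ (s ∩ t) = 0) : μ s = 0 := by
  rw [← Set.inter_union_sdiff s t]
  exact measure_union_null hinter hdiff

end OuterMeasureClass

/-- **Liar-cycle support conditions preclude a global joint distribution**
(probabilistic core of Theorem 15).  If a global joint distribution `p` on all
outcomes assigns probability `0` to each event `{ω : ω_i = v_i ∧ ω_{i+1} ≠ v_{i+1}}`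
(for `i = 0, …, N-2`) and to the event `{ω : ω_{N-1} = v_{N-1} ∧ ω_0 = v_0}`,
then it assigns probability `0` to `{ω : ω_0 = v_0}`. -/
theorem liar_cycle_no_global_distribution
    (N : ℕ) (hN : 2 ≤ N)
    (A : Fin N → Type)
    (v : ∀ i, A i) (p : PMF (∀ i, A i))
    (hchain : ∀ i : Fin N, ∀ h : (i : ℕ) + 1 < N,
      prob p {ω | ω i = v i ∧ ω ⟨(i : ℕ) + 1, h⟩ ≠ v ⟨(i : ℕ) + 1, h⟩} = 0)
    (hlast : ∀ i : Fin N, (i : ℕ) + 1 = N →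
      prob p {ω | ω i = v i ∧ ω ⟨0, by omega⟩ = v ⟨0, by omega⟩} = 0) :
    prob p {ω | ω ⟨0, by omega⟩ = v ⟨0, by omega⟩} = 0 := by
  obtain ⟨n, rfl⟩ : ∃ n, N = n + 1 := ⟨N - 1, by omega⟩
  let E : Fin (n + 1) → Set (∀ i, A i) := fun i => {ω | ω i = v i}
  have hdiff : prob p (E 0 \ E (Fin.last n)) = 0 :=
    measure_sdiff_null_of_chain p.toOuterMeasure E
      (fun i => hchain i.castSucc (by simp)) (Fin.last n)
  have hinter : prob p (E 0 ∩ E (Fin.last n)) = 0 := by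
    rw [Set.inter_comm]
    exact hlast (Fin.last n) rfl
  exact measure_null_of_sdiff_null_of_inter_null p.toOuterMeasure hdiff hinter
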